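/- In the labeling system of the star-identification protocol (labels in {φ, φ', l', L_2, ..., L_{n-1}} on n ≥ 3 agents, all initially φ, with transitions (φ,φ)→(l',l'), (l',φ)→(L_2,φ'), and (L_i,φ)→(L_{i+1},φ') for 2 ≤ i ≤ n−2), any reachable configuration containing an agent labeled L_{n-1} consists of exactly one agent labeled L_{n-1}, exactly one agent labeled l', and exactly n−2 agents labeled φ'. Moreover, no transition applies to such a configuration, so labels never change afterwards. -/
import Mathlib


open scoped Classical

/-- Labels of the star-identification protocol: `phi` (non-marked), `phi'`
(marked), `cand` (candidate center `l'`), and `L i` (a center having counted `i`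
agents). -/
inductive SLabel where
  | phi : SLabel
  | phi' : SLabel
  | cand : SLabel
  | L : ℕ → SLabel
deriving DecidableEq

/-- A step of the labeling system on `n` agents: on a pair of distinct agents,
`(φ, φ) → (l', l')`, `(l', φ) → (L_2, φ')`, or `(L_i, φ) → (L_{i+1}, φ')` for
`2 ≤ i ≤ n - 2`; all other pairs are unchanged. -/
def SStep {V : Type*} [DecidableEq V] (n : ℕ) (f g : V → SLabel) : Prop :=
  ∃ a b : V, a ≠ b ∧
    ((f a = .phi ∧ f b = .phi ∧
        g = Function.update (Function.update f a .cand) b .cand) ∨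
     (f a = .cand ∧ f b = .phi ∧
        g = Function.update (Function.update f a (.L 2)) b .phi') ∨
     (∃ i : ℕ, 2 ≤ i ∧ i ≤ n - 2 ∧ f a = .L i ∧ f b = .phi ∧
        g = Function.update (Function.update f a (.L (i + 1))) b .phi'))

/-- Integer weight of a label: `φ ↦ 0`, `φ' ↦ -1`, `l' ↦ 0`, `L i ↦ i - 1`. -/
def SWt : SLabel → ℤ
  | .phi => 0
  | .phi' => -1
  | .cand => 0
  | .L i => (i : ℤ) - 1

/-- Parity weight of a label: counts candidates and centers. -/
def SPr : SLabel → ℤ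
  | .phi => 0
  | .phi' => 0
  | .cand => 1
  | .L _ => 1

@[simp] lemma SWt_phi : SWt SLabel.phi = 0 := rfl
@[simp] lemma SWt_phi' : SWt SLabel.phi' = -1 := rfl
@[simp] lemma SWt_cand : SWt SLabel.cand = 0 := rfl
@[simp] lemma SWt_L (i : ℕ) : SWt (SLabel.L i) = (i : ℤ) - 1 := rfl
@[simp] lemma SPr_phi : SPr SLabel.phi = 0 := rfl
@[simp] lemma SPr_phi' : SPr SLabel.phi' = 0 := rfl
@[simp] lemma SPr_cand : SPr SLabel.cand = 1 := rfl
@[simp] lemma SPr_L (i : ℕ) : SPr (SLabel.L i) = 1 := rfl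

/-- Well-formedness of a label: centers have counted at least two agents. -/
def SGood : SLabel → Prop
  | .L i => 2 ≤ i
  | _ => True

lemma sum_update2 {V : Type*} [Fintype V] [DecidableEq V] (F : SLabel → ℤ)
    (f : V → SLabel) {a b : V} (hab : a ≠ b) (u v : SLabel) :
    ∑ x, F (Function.update (Function.update f a u) b v x)
      = (∑ x, F (f x)) - F (f a) - F (f b) + F u + F v := by
  classical
  set s : Finset V := {a, b} with hs
  have key : ∀ g : V → SLabel, ∑ x, F (g x)
      = ∑ x ∈ sᶜ, F (g x) + (F (g a) + F (g b)) := by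
    intro g
    rw [← Finset.sum_compl_add_sum s, Finset.sum_pair hab]
  rw [key, key f]
  have hcompl : ∀ x ∈ sᶜ,
      F (Function.update (Function.update f a u) b v x) = F (f x) := by
    intro x hx
    simp only [hs, Finset.mem_compl, Finset.mem_insert, Finset.mem_singleton,
      not_or] at hx
    rw [Function.update_of_ne hx.2, Function.update_of_ne hx.1]
  rw [Finset.sum_congr rfl hcompl, Function.update_of_ne hab,
    Function.update_self, Function.update_self]
  ring

lemma good_update {V : Type*} [DecidableEq V] {f : V → SLabel}
    (h3 : ∀ x, SGood (f x)) {a b : V} {u v : SLabel}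
    (hu : SGood u) (hv : SGood v) :
    ∀ x, SGood (Function.update (Function.update f a u) b v x) := by
  intro x
  rcases eq_or_ne x b with rfl | hxb
  · simpa using hv
  · rw [Function.update_of_ne hxb]
    rcases eq_or_ne x a with rfl | hxa
    · simpa using hu
    · rw [Function.update_of_ne hxa]; exact h3 x

lemma SInv {V : Type*} [Fintype V] [DecidableEq V] {n : ℕ} {f : V → SLabel}
    (hf : Relation.ReflTransGen (SStep n) (fun _ => SLabel.phi) f) :
    ∑ a, SWt (f a) = 0 ∧ Even (∑ a, SPr (f a)) ∧ ∀ a, SGood (f a) := by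
  induction hf with
  | refl => exact ⟨by simp [SWt], by simp [SPr], fun a => trivial⟩
  | tail _ hstep ih =>
    obtain ⟨h1, h2, h3⟩ := ih
    obtain ⟨a, b, hab, hcase⟩ := hstep
    rcases hcase with ⟨ha, hb, hg⟩ | ⟨ha, hb, hg⟩ | ⟨i, hi2, _, ha, hb, hg⟩ <;>
      subst hg
    · refine ⟨?_, ?_, good_update h3 trivial trivial⟩
      · rw [sum_update2 SWt _ hab, ha, hb]; simp only [SWt_phi, SWt_cand]; linarith
      · obtain ⟨k, hk⟩ := h2
        refine ⟨k + 1, ?_⟩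
        rw [sum_update2 SPr _ hab, ha, hb]
        simp only [SPr_phi, SPr_phi', SPr_cand, SPr_L]
        linarith
    · refine ⟨?_, ?_, good_update h3 (by norm_num [SGood]) trivial⟩
      · rw [sum_update2 SWt _ hab, ha, hb]
        simp only [SWt_phi, SWt_phi', SWt_cand, SWt_L]
        push_cast
        linarith
      · obtain ⟨k, hk⟩ := h2
        refine ⟨k, ?_⟩
        rw [sum_update2 SPr _ hab, ha, hb]
        simp only [SPr_phi, SPr_phi', SPr_cand, SPr_L]
        linarith
    · refine ⟨?_, ?_, good_update h3 (by simp [SGood]; omega) trivial⟩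
      · rw [sum_update2 SWt _ hab, ha, hb]
        simp only [SWt_phi, SWt_phi', SWt_cand, SWt_L]
        push_cast
        linarith
      · obtain ⟨k, hk⟩ := h2
        refine ⟨k, ?_⟩
        rw [sum_update2 SPr _ hab, ha, hb]
        simp only [SPr_phi, SPr_phi', SPr_cand, SPr_L]
        linarith

/-- Any reachable configuration containing an agent labeled `L_{n-1}` has exactly
one `L_{n-1}` agent, exactly one candidate `l'`, and `n - 2` marked agents `φ'`;
moreover no further transition applies. -/
theorem stmt_12 {V : Type*} [Fintype V] [DecidableEq V] (n : ℕ) (hn3 : 3 ≤ n)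
    (hn : Fintype.card V = n) (f : V → SLabel)
    (hf : Relation.ReflTransGen (SStep n) (fun _ => SLabel.phi) f)
    (hex : ∃ a : V, f a = SLabel.L (n - 1)) :
    (Finset.univ.filter (fun a : V => f a = SLabel.L (n - 1))).card = 1 ∧
    (Finset.univ.filter (fun a : V => f a = SLabel.cand)).card = 1 ∧
    (Finset.univ.filter (fun a : V => f a = SLabel.phi')).card = n - 2 ∧
    ∀ g : V → SLabel, ¬ SStep n f g := by
  classical
  obtain ⟨a0, ha0⟩ := hex
  obtain ⟨h1, h2, h3⟩ := SInv hf
  set P := Finset.univ.filter (fun a : V => f a = SLabel.phi) with hP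
  set P' := Finset.univ.filter (fun a : V => f a = SLabel.phi') with hP'
  set C := Finset.univ.filter (fun a : V => f a = SLabel.cand) with hC
  set Ls := Finset.univ.filter (fun a : V => ∃ i, f a = SLabel.L i) with hLs
  have ha0mem : a0 ∈ Ls := by
    rw [hLs, Finset.mem_filter]; exact ⟨Finset.mem_univ _, n - 1, ha0⟩
  -- total count
  have hone : ∀ a : V, (if f a = SLabel.phi then (1:ℕ) else 0)
      + (if f a = SLabel.phi' then 1 else 0)
      + (if f a = SLabel.cand then 1 else 0)
      + (if ∃ i, f a = SLabel.L i then 1 else 0) = 1 := by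
    intro a; cases hfa : f a <;> simp [hfa]
  have hcard : P.card + P'.card + C.card + Ls.card = n := by
    rw [hP, hP', hC, hLs]
    simp only [Finset.card_filter]
    rw [← Finset.sum_add_distrib, ← Finset.sum_add_distrib,
      ← Finset.sum_add_distrib, Finset.sum_congr rfl (fun a _ => hone a)]
    simp [Finset.card_univ, hn]
  -- weight identity
  have hsplit : ∀ a : V, SWt (f a)
      = (if ∃ i, f a = SLabel.L i then SWt (f a) else 0)
        + (if f a = SLabel.phi' then (-1:ℤ) else 0) := by
    intro a; cases hfa : f a <;> simp [hfa, SWt]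
  have hwt : (P'.card : ℤ) = ∑ a ∈ Ls, SWt (f a) := by
    have e1 : ∑ a, SWt (f a) = ∑ a ∈ Ls, SWt (f a) + (-(P'.card : ℤ)) := by
      calc ∑ a, SWt (f a)
          = ∑ a, ((if ∃ i, f a = SLabel.L i then SWt (f a) else 0)
            + (if f a = SLabel.phi' then (-1:ℤ) else 0)) :=
        Finset.sum_congr rfl (fun a _ => hsplit a)
        _ = _ := by
          rw [Finset.sum_add_distrib, ← Finset.sum_filter, ← Finset.sum_filter,
            Finset.sum_const]
          simp [hP', hLs]
    rw [h1] at e1; linarith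
  -- parity identity
  have hsplit2 : ∀ a : V, SPr (f a)
      = (if f a = SLabel.cand then (1:ℤ) else 0)
        + (if ∃ i, f a = SLabel.L i then (1:ℤ) else 0) := by
    intro a; cases hfa : f a <;> simp [hfa, SPr]
  have hpr : ∑ a, SPr (f a) = (C.card : ℤ) + Ls.card := by
    calc ∑ a, SPr (f a)
        = ∑ a, ((if f a = SLabel.cand then (1:ℤ) else 0)
          + (if ∃ i, f a = SLabel.L i then (1:ℤ) else 0)) :=
      Finset.sum_congr rfl (fun a _ => hsplit2 a)
      _ = _ := by
        rw [Finset.sum_add_distrib, Finset.sum_boole, Finset.sum_boole]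
  have heven : Even (C.card + Ls.card) := by
    rw [hpr] at h2
    rw [← Nat.cast_add] at h2
    exact_mod_cast h2
  -- lower bound on the number of marked agents
  have hLspos : 1 ≤ Ls.card := Finset.card_pos.mpr ⟨a0, ha0mem⟩
  have hbound : (n : ℤ) - 2 + ((Ls.card : ℤ) - 1) ≤ (P'.card : ℤ) := by
    rw [hwt, ← Finset.add_sum_erase _ _ ha0mem]
    have h0 : SWt (f a0) = (n : ℤ) - 2 := by
      rw [ha0, SWt_L]
      omega
    have hterm : ∀ a ∈ Ls.erase a0, (1:ℤ) ≤ SWt (f a) := by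
      intro a ha
      obtain ⟨i, hi⟩ :=
        (Finset.mem_filter.mp (Finset.mem_of_mem_erase ha)).2
      have hg := h3 a
      rw [hi] at hg
      have hg2 : 2 ≤ i := hg
      rw [hi, SWt_L]
      omega
    have hsum : ((Ls.erase a0).card : ℤ) • (1:ℤ) ≤ ∑ a ∈ Ls.erase a0, SWt (f a) := by
      exact_mod_cast Finset.card_nsmul_le_sum _ _ _ hterm
    have hcarde : (Ls.erase a0).card = Ls.card - 1 :=
      Finset.card_erase_of_mem ha0mem
    rw [hcarde] at hsum
    have : ((Ls.card - 1 : ℕ) : ℤ) = (Ls.card : ℤ) - 1 := by omega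
    rw [this] at hsum
    simp only [smul_eq_mul, mul_one] at hsum
    linarith
  -- solve the counting constraints
  obtain ⟨k, hk⟩ := heven
  have hnums : Ls.card = 1 ∧ C.card = 1 ∧ P'.card = n - 2 ∧ P.card = 0 := by
    omega
  obtain ⟨hLs1, hC1, hP'1, hP0⟩ := hnums
  refine ⟨?_, hC1, hP'1, ?_⟩
  · -- exactly one agent labeled L (n-1)
    have hLseq : Ls = {a0} := by
      refine Finset.eq_singleton_iff_unique_mem.mpr ⟨ha0mem, fun x hx => ?_⟩
      exact Finset.card_le_one.mp (le_of_eq hLs1) x hx a0 ha0mem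
    have hsub : Finset.univ.filter (fun a : V => f a = SLabel.L (n - 1)) ⊆ Ls := by
      intro x hx
      rw [Finset.mem_filter] at hx
      rw [hLs, Finset.mem_filter]
      exact ⟨hx.1, n - 1, hx.2⟩
    have : Finset.univ.filter (fun a : V => f a = SLabel.L (n - 1)) = {a0} := by
      refine Finset.Subset.antisymm (hLseq ▸ hsub) ?_
      rw [Finset.singleton_subset_iff, Finset.mem_filter]
      exact ⟨Finset.mem_univ _, ha0⟩
    rw [this, Finset.card_singleton]
  · -- no further step
    have hPempty : ∀ x : V, f x ≠ SLabel.phi := by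
      intro x hx
      have hxP : x ∈ P := by rw [hP, Finset.mem_filter]; exact ⟨Finset.mem_univ _, hx⟩
      have := Finset.card_eq_zero.mp hP0
      rw [this] at hxP
      exact absurd hxP (Finset.notMem_empty x)
    intro g hg
    obtain ⟨a, b, hab, hc⟩ := hg
    rcases hc with ⟨_, hb, _⟩ | ⟨_, hb, _⟩ | ⟨i, _, _, _, hb, _⟩ <;>
      exact hPempty b hb
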